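/- Soundness of simplification rule S3 (pendant-edge case): let G be a graph, b a vertex of degree 2 with neighbours d and c, where c has degree 1. Then there is a maximum induced matching of G that contains the edge {b, c}; consequently the maximum induced matching size of G equals 1 plus the maximum induced matching size of G with vertices b, c, d removed. -/

import Mathlib

open SimpleGraph

/-- A set `M` of edges of `G` is an induced matching: all elements are edges of `G`,
and any two distinct edges of `M` neither share an endpoint nor have adjacent endpoints;
equivalently every vertex of the subgraph induced by the endpoints of `M` has degree 1. -/
def IsInducedMatching {V : Type*} (G : SimpleGraph V) (M : Set (Sym2 V)) : Prop :=
  M ⊆ G.edgeSet ∧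
    ∀ e ∈ M, ∀ f ∈ M, e ≠ f → ∀ u ∈ e, ∀ v ∈ f, u ≠ v ∧ ¬ G.Adj u v

/-- The maximum cardinality of an induced matching of `G`. -/
noncomputable def maxIM {V : Type*} (G : SimpleGraph V) : ℕ :=
  sSup {k | ∃ M : Finset (Sym2 V), IsInducedMatching G (↑M) ∧ M.card = k}

/-!
Since `c` hangs at `b` and `N(b) = {c, d}`, every edge through `c` passes through `b`, so every
edge meeting `{b, c, d}` meets the clique `{b, d}`, and an induced matching contains at most one
such edge. Replacing it in a maximum induced matching by `bc`, which is far from every edge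
avoiding `{b, c, d}`, gives a maximum induced matching through `bc` whose other edges form an
induced matching of `G - {b, c, d}`; conversely every induced matching of `G - {b, c, d}`
extends by `bc`.
-/

section InducedMatching

open Finset

variable {V : Type*} {G : SimpleGraph V}

theorem IsInducedMatching.subset {M N : Set (Sym2 V)} (hM : IsInducedMatching G M)
    (hNM : N ⊆ M) : IsInducedMatching G N :=
  ⟨hNM.trans hM.1, fun e he f hf => hM.2 e (hNM he) f (hNM hf)⟩

theorem IsInducedMatching.insert {M : Set (Sym2 V)} {e : Sym2 V} (hM : IsInducedMatching G M)
    (he : e ∈ G.edgeSet) (hfar : ∀ f ∈ M, ∀ u ∈ e, ∀ v ∈ f, u ≠ v ∧ ¬ G.Adj u v) :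
    IsInducedMatching G (insert e M) := by
  refine ⟨Set.insert_subset he hM.1, ?_⟩
  rintro e₁ (rfl | he₁) e₂ (rfl | he₂) hne u hu v hv
  · exact absurd rfl hne
  · exact hfar e₂ he₂ u hu v hv
  · obtain ⟨hvu, hadj⟩ := hfar e₁ he₁ v hv u hu
    exact ⟨hvu.symm, fun h => hadj h.symm⟩
  · exact hM.2 e₁ he₁ e₂ he₂ hne u hu v hv

theorem IsInducedMatching.subsingleton_meeting_clique {M : Set (Sym2 V)} {K : Set V}
    (hM : IsInducedMatching G M) (hK : G.IsClique K) :
    {e ∈ M | ∃ v ∈ e, v ∈ K}.Subsingleton := by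
  rintro e ⟨he, u, hu, huK⟩ f ⟨hf, v, hv, hvK⟩
  by_contra hne
  obtain ⟨huv, hadj⟩ := hM.2 e he f hf hne u hu v hv
  exact hadj (hK huK hvK huv)

theorem isInducedMatching_induce_iff {s : Set V} {M : Set (Sym2 s)} :
    IsInducedMatching (G.induce s) M ↔ IsInducedMatching G (Sym2.map Subtype.val '' M) := by
  have hinj := Sym2.map.injective (Subtype.val_injective (p := (· ∈ s)))
  have hedge : ∀ z : Sym2 s, z ∈ (G.induce s).edgeSet ↔ Sym2.map Subtype.val z ∈ G.edgeSet :=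
    Sym2.ind fun _ _ => Iff.rfl
  simp only [IsInducedMatching, Set.subset_def, Set.forall_mem_image, ne_eq, hinj.eq_iff, hedge,
    Sym2.mem_map, forall_exists_index, and_imp, forall_apply_eq_imp_iff₂, Subtype.ext_iff,
    comap_adj, Function.Embedding.subtype_apply]

section Maximum

variable [Finite V]

theorem bddAbove_inducedMatching_cards (G : SimpleGraph V) :
    BddAbove {k | ∃ M : Finset (Sym2 V), IsInducedMatching G (↑M) ∧ M.card = k} := by
  have := Fintype.ofFinite (Sym2 V)
  exact ⟨Fintype.card (Sym2 V), by rintro k ⟨M, -, rfl⟩; exact M.card_le_univ⟩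

theorem card_le_maxIM {M : Finset (Sym2 V)} (hM : IsInducedMatching G M) : #M ≤ maxIM G :=
  le_csSup (bddAbove_inducedMatching_cards G) ⟨M, hM, rfl⟩

theorem exists_isInducedMatching_card_eq_maxIM (G : SimpleGraph V) :
    ∃ M : Finset (Sym2 V), IsInducedMatching G M ∧ #M = maxIM G := by
  have hempty : {k | ∃ M : Finset (Sym2 V), IsInducedMatching G M ∧ #M = k}.Nonempty :=
    ⟨0, ∅, by simp [IsInducedMatching]⟩
  exact Nat.sSup_mem hempty (bddAbove_inducedMatching_cards G)

theorem card_le_maxIM_induce {s : Set V} {M : Finset (Sym2 V)} (hM : IsInducedMatching G M)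
    (hs : ∀ e ∈ M, ∀ v ∈ e, v ∈ s) : #M ≤ maxIM (G.induce s) := by
  set F := (Function.Embedding.subtype (· ∈ s)).sym2Map
  have hrange : (M : Set (Sym2 V)) ⊆ Set.range F := fun e he =>
    ⟨e.attachWith (hs e he), Sym2.attachWith_map_subtypeVal _⟩
  set M' := M.preimage F F.injective.injOn
  have hM' : F '' M' = M := by
    rw [Finset.coe_preimage, Set.image_preimage_eq_of_subset hrange]
  have hmap : M'.map F = M := Finset.coe_injective (by rwa [coe_map])
  calc #M = #(M'.map F) := by rw [hmap]
    _ = #M' := card_map F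
    _ ≤ maxIM (G.induce s) := card_le_maxIM (isInducedMatching_induce_iff.2 (hM' ▸ hM))

theorem exists_isInducedMatching_within_card_eq_maxIM_induce (G : SimpleGraph V) (s : Set V) :
    ∃ M : Finset (Sym2 V), IsInducedMatching G M ∧ (∀ e ∈ M, ∀ v ∈ e, v ∈ s) ∧
      #M = maxIM (G.induce s) := by
  obtain ⟨M', hM', hcard⟩ := exists_isInducedMatching_card_eq_maxIM (G.induce s)
  refine ⟨M'.map (Function.Embedding.subtype (· ∈ s)).sym2Map, ?_, ?_, by rw [card_map, hcard]⟩
  · rw [coe_map]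
    exact isInducedMatching_induce_iff.1 hM'
  · simp +contextual

end Maximum

theorem neighborSet_eq_singleton_of_degree_eq_one {v w : V} [Fintype (G.neighborSet v)]
    (h : G.degree v = 1) (hvw : G.Adj v w) : G.neighborSet v = {w} := by
  obtain ⟨x, -, huniq⟩ := degree_eq_one_iff_existsUnique_adj.1 h
  ext y
  exact ⟨fun hy => (huniq y hy).trans (huniq w hvw).symm, by rintro rfl; exact hvw⟩

theorem Finset.card_insert_mk_of_forall_notMem [DecidableEq V] {M : Finset (Sym2 V)} {S : Set V}
    {u : V} (hM : ∀ e ∈ M, ∀ v ∈ e, v ∉ S) (hu : u ∈ S) (w : V) :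
    #(insert s(u, w) M) = #M + 1 :=
  card_insert_of_notMem fun he => hM _ he u (Sym2.mem_mk_left u w) hu

section PendantPath

variable {b c d : V}

theorem ne_and_not_adj_of_mem_pendant_edge (hnb : G.neighborSet b = {d, c})
    (hnc : G.neighborSet c = {b}) {u v : V} (hu : u ∈ s(b, c))
    (hv : v ∉ ({b, c, d} : Set V)) : u ≠ v ∧ ¬ G.Adj u v := by
  simp only [Set.mem_insert_iff, Set.mem_singleton_iff, not_or] at hv
  refine ⟨by grind, fun huv => ?_⟩
  rcases Sym2.mem_iff.1 hu with rfl | rfl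
  · rw [← mem_neighborSet, hnb] at huv
    grind
  · rw [← mem_neighborSet, hnc] at huv
    grind

theorem mem_of_mem_edgeSet_of_neighborSet_eq_singleton (hnc : G.neighborSet c = {b})
    {e : Sym2 V} (he : e ∈ G.edgeSet) (hce : c ∈ e) : b ∈ e := by
  obtain ⟨w, rfl⟩ := Sym2.mem_iff_exists.1 hce
  obtain rfl : w = b := by rwa [← Set.mem_singleton_iff, ← hnc]
  exact Sym2.mem_mk_right c w

theorem isInducedMatching_insert_pendant_edge [DecidableEq V] (hnb : G.neighborSet b = {d, c})
    (hnc : G.neighborSet c = {b}) {M : Finset (Sym2 V)} (hM : IsInducedMatching G M)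
    (hM_avoid : ∀ e ∈ M, ∀ v ∈ e, v ∉ ({b, c, d} : Set V)) :
    IsInducedMatching G ↑(insert s(b, c) M) := by
  rw [coe_insert]
  refine hM.insert (by rw [mem_edgeSet, ← mem_neighborSet, hnb]; simp) fun f hf _ hu v hv => ?_
  exact ne_and_not_adj_of_mem_pendant_edge hnb hnc hu (hM_avoid f hf v hv)

theorem exists_isInducedMatching_avoiding_pendant_path [Finite V]
    (hnb : G.neighborSet b = {d, c}) (hnc : G.neighborSet c = {b}) :
    ∃ M : Finset (Sym2 V), IsInducedMatching G M ∧
      (∀ e ∈ M, ∀ v ∈ e, v ∉ ({b, c, d} : Set V)) ∧ maxIM G ≤ #M + 1 := by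
  classical
  obtain ⟨M, hM, hcard⟩ := exists_isInducedMatching_card_eq_maxIM G
  set avoids := fun e : Sym2 V => ∀ v ∈ e, v ∉ ({b, c, d} : Set V)
  have hbd : G.IsClique {b, d} := isClique_pair.2 fun _ => by
    rw [← mem_neighborSet, hnb]; simp
  have hmeets : ∀ e ∈ M.filter (¬ avoids ·), e ∈ M ∧ ∃ v ∈ e, v ∈ ({b, d} : Set V) := by
    intro e he
    obtain ⟨heM, hmeet⟩ := mem_filter.1 he
    simp only [avoids, not_forall, not_not] at hmeet
    obtain ⟨v, hv, hvS⟩ := hmeet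
    refine ⟨heM, ?_⟩
    rcases hvS with rfl | rfl | rfl
    · exact ⟨v, hv, by simp⟩
    · exact ⟨b, mem_of_mem_edgeSet_of_neighborSet_eq_singleton hnc (hM.1 heM) hv, by simp⟩
    · exact ⟨v, hv, by simp⟩
  have hrest : #(M.filter (¬ avoids ·)) ≤ 1 := card_le_one.2 fun e he f hf =>
    hM.subsingleton_meeting_clique hbd (hmeets e he) (hmeets f hf)
  refine ⟨M.filter avoids, hM.subset (coe_subset.2 (filter_subset _ _)),
    fun e he => (mem_filter.1 he).2, ?_⟩
  have hsplit := card_filter_add_card_filter_not (s := M) avoids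
  omega

end PendantPath

end InducedMatching

theorem stmt_9_general {V : Type*} [Fintype V] (G : SimpleGraph V)
    [DecidableRel G.Adj] (b c d : V)
    (hnb : G.neighborSet b = {d, c}) (hc : G.degree c = 1) :
    (∃ M : Finset (Sym2 V), IsInducedMatching G (↑M) ∧ M.card = maxIM G ∧
      s(b, c) ∈ M) ∧
    maxIM G = 1 + maxIM (G.induce ({b, c, d} : Set V)ᶜ) := by
  classical
  have hbc : G.Adj b c := by rw [← mem_neighborSet, hnb]; simp
  have hnc := neighborSet_eq_singleton_of_degree_eq_one hc hbc.symm
  obtain ⟨M, hM, hM_avoid, hmax⟩ := exists_isInducedMatching_avoiding_pendant_path hnb hnc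
  obtain ⟨L, hL, hL_avoid, hL_card⟩ :=
    exists_isInducedMatching_within_card_eq_maxIM_induce G ({b, c, d} : Set V)ᶜ
  have hb : b ∈ ({b, c, d} : Set V) := by simp
  have hM_ins := isInducedMatching_insert_pendant_edge hnb hnc hM hM_avoid
  have hM_ins_card := Finset.card_insert_mk_of_forall_notMem hM_avoid hb c
  have hL_ins_card := Finset.card_insert_mk_of_forall_notMem hL_avoid hb c
  have hM_le := card_le_maxIM hM_ins
  have hL_le := card_le_maxIM (isInducedMatching_insert_pendant_edge hnb hnc hL hL_avoid)
  have hM_proj := card_le_maxIM_induce (s := ({b, c, d} : Set V)ᶜ) hM hM_avoid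
  exact ⟨⟨_, hM_ins, by omega, Finset.mem_insert_self _ _⟩, by omega⟩

/-- soundness of simplification rule S3, pendant-edge case: if `b` has
degree 2 with neighbours `d` and `c`, and `c` has degree 1, then some maximum induced
matching contains `{b,c}`, and `maxIM G = 1 + maxIM (G − {b,c,d})`. -/
theorem stmt_9 {V : Type*} [Fintype V] [DecidableEq V] (G : SimpleGraph V)
    [DecidableRel G.Adj] (b c d : V)
    (hb : G.degree b = 2) (hnb : G.neighborSet b = {d, c}) (hc : G.degree c = 1) :
    (∃ M : Finset (Sym2 V), IsInducedMatching G (↑M) ∧ M.card = maxIM G ∧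
      s(b, c) ∈ M) ∧
    maxIM G = 1 + maxIM (G.induce ({b, c, d} : Set V)ᶜ) :=
  stmt_9_general G b c d hnb hc
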